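/- arXiv:1610.09020 — 2 statements merged into one kernel-verified Lean document; each statement's English description precedes it below -/
import Mathlib

section
/- For any vector u in a real Hilbert space and R > 0, the Huber function composed with the norm satisfies h_R(‖u‖) = ‖u‖² − d_B(u)², where d_B(u) is the distance from u to the closed ball B of radius R centered at the origin. -/
/-!
The distance from `u` to the ball is `max (‖u‖ - R) 0`, attained at the radial projection
`(R / ‖u‖) • u`; outside the ball, `‖u‖² - (‖u‖ - R)² = 2R‖u‖ - R²`.
-/

noncomputable def huber (R t : ℝ) : ℝ := if |t| ≤ R then t ^ 2 else 2 * R * |t| - R ^ 2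

namespace Metric

theorem infDist_closedBall {V P : Type*} [SeminormedAddCommGroup V] [NormedSpace ℝ V]
    [PseudoMetricSpace P] [NormedAddTorsor V P] (x y : P) {r : ℝ} (hr : 0 ≤ r) :
    infDist x (closedBall y r) = max (dist x y - r) 0 := by
  refine le_antisymm ?_ (max_le ?_ infDist_nonneg)
  · rcases le_or_gt (dist x y) r with hxy | hxy
    · rw [infDist_zero_of_mem (mem_closedBall.2 hxy)]
      exact le_max_right _ _
    · have hd : 0 < dist x y := hr.trans_lt hxy
      have hc : r / dist x y ≤ 1 := (div_le_one hd).2 hxy.le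
      set z := AffineMap.lineMap y x (r / dist x y)
      have hz : z ∈ closedBall y r := by
        rw [mem_closedBall, dist_lineMap_left, Real.norm_of_nonneg (by positivity), dist_comm y x,
          div_mul_cancel₀ _ hd.ne']
      calc infDist x (closedBall y r) ≤ dist z x := dist_comm x z ▸ infDist_le_dist_of_mem hz
        _ = dist x y - r := by
          rw [dist_lineMap_right, Real.norm_of_nonneg (sub_nonneg.2 hc), dist_comm y x, sub_mul,
            div_mul_cancel₀ _ hd.ne', one_mul]
        _ ≤ max (dist x y - r) 0 := le_max_left _ _
  · rw [le_infDist (nonempty_closedBall.2 hr)]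
    intro z hz
    linarith [dist_triangle x z y, mem_closedBall.1 hz]

end Metric

theorem huber_eq_sq_sub_sq_max {R t : ℝ} (ht : 0 ≤ t) :
    huber R t = t ^ 2 - max (t - R) 0 ^ 2 := by
  rw [huber, abs_of_nonneg ht]
  split_ifs with htR
  · rw [max_eq_right (sub_nonpos.2 htR)]
    ring
  · rw [max_eq_left (by linarith)]
    ring

theorem huber_norm_repr {H : Type*} [NormedAddCommGroup H] [InnerProductSpace ℝ H]
    (R : ℝ) (hR : 0 < R) (u : H) :
    huber R ‖u‖ = ‖u‖ ^ 2 - (Metric.infDist u (Metric.closedBall (0 : H) R)) ^ 2 := by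
  rw [Metric.infDist_closedBall u 0 hR.le, dist_zero_right, huber_eq_sq_sub_sq_max (norm_nonneg u)]
end

section
/- For the Nesterov accelerated gradient method applied to minimizing a convex function F with L-Lipschitz continuous gradient over a closed convex set Z, the iterates satisfy F(z_t) − F⋆ ≤ 2L‖z₀ − z⋆‖²/(t+1)², where z⋆ is any minimizer. -/
/-!
A projected gradient step `p` from `y` with step `1 / L` satisfies, for every `x ∈ Z`,
`F p ≤ F x + L / 2 * (‖y - x‖ ^ 2 - ‖p - x‖ ^ 2)`: combine the descent lemma for an
`L`-Lipschitz gradient, the gradient inequality of a convex function at `y`, and the variational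
inequality characterising the projection. Apply this at `x = (1 - θ) z k + θ zstar` with
`θ = 2 / (k + 2)` and multiply by `θ⁻²`: the extrapolation coefficient `(k - 1) / (k + 2)` is
exactly what turns `θ⁻¹ (y k - x)` and `θ⁻¹ (z (k + 1) - x)` into consecutive terms of the
sequence `((k + 1) / 2) z k - ((k - 1) / 2) z (k - 1) - zstar`. Hence the energy
`(k + 1)² / 4 * (F (z k) - F zstar) + L / 2 * ‖…‖²` is nonincreasing, and its value at `k = 1`
is at most `L / 2 * ‖z 0 - zstar‖ ^ 2`.
-/

open Set
open scoped RealInnerProductSpace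

section FirstOrder

variable {E : Type*} [NormedAddCommGroup E] [InnerProductSpace ℝ E] [CompleteSpace E]
  {F : E → ℝ} {F' : E → E}

theorem HasGradientAt.hasDerivAt_comp_add_smul {g x v : E} {s : ℝ}
    (h : HasGradientAt F g (x + s • v)) :
    HasDerivAt (fun t : ℝ => F (x + t • v)) ⟪g, v⟫ s := by
  have hline : HasDerivAt (fun t : ℝ => x + t • v) v s := by
    simpa using ((hasDerivAt_id s).smul_const v).const_add x
  have := h.hasFDerivAt.comp_hasDerivAt s hline
  simp only [Function.comp_def, InnerProductSpace.toDual_apply_apply] at this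
  exact this

theorem ConvexOn.add_inner_sub_le_of_hasGradientAt {s : Set E} (hF : ConvexOn ℝ s F)
    {g x w : E} (hx : x ∈ s) (hw : w ∈ s) (hg : HasGradientAt F g x) :
    F x + ⟪g, w - x⟫ ≤ F w := by
  have hline : ConvexOn ℝ (Icc 0 1) (fun t : ℝ => F (x + t • (w - x))) := by
    have h := hF.comp_affineMap (AffineMap.lineMap x w)
    refine (h.subset (fun t ht => ?_) (convex_Icc 0 1)).congr fun t _ => ?_
    · rw [mem_preimage, AffineMap.lineMap_apply_module', add_comm]
      exact hF.1.add_smul_sub_mem hx hw ht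
    · simp [AffineMap.lineMap_apply_module', add_comm]
  have hd : HasDerivAt (fun t : ℝ => F (x + t • (w - x))) ⟪g, w - x⟫ 0 :=
    (by simpa using hg : HasGradientAt F g (x + (0 : ℝ) • (w - x))).hasDerivAt_comp_add_smul
  have := hline.le_slope_of_hasDerivAt (by simp) (by simp) zero_lt_one hd
  simp only [slope_def_field, one_smul, add_sub_cancel, zero_smul, add_zero, sub_zero,
    div_one] at this
  linarith

theorem le_add_inner_add_sq_of_lipschitz_gradient {L : ℝ}
    (hgrad : ∀ u, HasGradientAt F (F' u) u) (hLip : ∀ u v, ‖F' u - F' v‖ ≤ L * ‖u - v‖)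
    (x v : E) : F (x + v) ≤ F x + ⟪F' x, v⟫ + L / 2 * ‖v‖ ^ 2 := by
  set φ : ℝ → ℝ := fun t => F (x + t • v) - t * ⟪F' x, v⟫ - L / 2 * t ^ 2 * ‖v‖ ^ 2
  have hφ : ∀ t, HasDerivAt φ (⟪F' (x + t • v), v⟫ - ⟪F' x, v⟫ - L * t * ‖v‖ ^ 2) t := by
    intro t
    have := ((hgrad (x + t • v)).hasDerivAt_comp_add_smul.sub
      ((hasDerivAt_id t).mul_const ⟪F' x, v⟫)).sub
      (((hasDerivAt_pow 2 t).const_mul (L / 2)).mul_const (‖v‖ ^ 2))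
    exact this.congr_deriv (by ring)
  have hanti : AntitoneOn φ (Icc 0 1) := by
    refine antitoneOn_of_hasDerivWithinAt_nonpos (convex_Icc 0 1)
      (fun t _ => (hφ t).continuousAt.continuousWithinAt) (fun t _ => (hφ t).hasDerivWithinAt)
      fun t ht => ?_
    rw [interior_Icc] at ht
    have hLt : ‖F' (x + t • v) - F' x‖ ≤ L * (t * ‖v‖) := by
      simpa [norm_smul, abs_of_pos ht.1] using hLip (x + t • v) x
    calc ⟪F' (x + t • v), v⟫ - ⟪F' x, v⟫ - L * t * ‖v‖ ^ 2
        = ⟪F' (x + t • v) - F' x, v⟫ - L * (t * ‖v‖) * ‖v‖ := by rw [inner_sub_left]; ring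
      _ ≤ ‖F' (x + t • v) - F' x‖ * ‖v‖ - L * (t * ‖v‖) * ‖v‖ := by
        gcongr; exact real_inner_le_norm _ _
      _ ≤ 0 := by nlinarith [norm_nonneg v]
  have := hanti (by simp) (by simp) zero_le_one
  simp only [φ, one_smul, zero_smul, add_zero] at this
  linarith

end FirstOrder

section Projection

variable {E : Type*} [NormedAddCommGroup E] [InnerProductSpace ℝ E]

theorem Convex.real_inner_sub_le_zero_of_forall_norm_sub_le {Z : Set E} (hZ : Convex ℝ Z)
    {u p : E} (hp : p ∈ Z) (hmin : ∀ w ∈ Z, ‖u - p‖ ≤ ‖u - w‖) :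
    ∀ w ∈ Z, ⟪u - p, w - p⟫ ≤ 0 := by
  have : Nonempty Z := ⟨⟨p, hp⟩⟩
  refine (norm_eq_iInf_iff_real_inner_le_zero hZ hp).mp (le_antisymm ?_ ?_)
  · exact le_ciInf fun w => hmin w w.2
  · exact ciInf_le ⟨0, fun _ ⟨_, h⟩ => h ▸ norm_nonneg _⟩ (⟨p, hp⟩ : Z)

end Projection

section ProjectedGradient

variable {E : Type*} [NormedAddCommGroup E] [InnerProductSpace ℝ E] [CompleteSpace E]
  {F : E → ℝ} {F' : E → E} {L : ℝ} {Z : Set E}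

theorem le_add_sq_sub_sq_of_projected_gradient_step (hF : ConvexOn ℝ univ F)
    (hgrad : ∀ u, HasGradientAt F (F' u) u) (hL : 0 < L)
    (hLip : ∀ u v, ‖F' u - F' v‖ ≤ L * ‖u - v‖) (hZ : Convex ℝ Z) {y p : E} (hp : p ∈ Z)
    (hmin : ∀ w ∈ Z, ‖y - (1 / L) • F' y - p‖ ≤ ‖y - (1 / L) • F' y - w‖) {x : E} (hx : x ∈ Z) :
    F p ≤ F x + L / 2 * (‖y - x‖ ^ 2 - ‖p - x‖ ^ 2) := by
  have hdescent : F p ≤ F y + ⟪F' y, p - y⟫ + L / 2 * ‖y - p‖ ^ 2 := by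
    simpa [norm_sub_rev] using le_add_inner_add_sq_of_lipschitz_gradient hgrad hLip y (p - y)
  have hconv : F y + ⟪F' y, x - y⟫ ≤ F x :=
    hF.add_inner_sub_le_of_hasGradientAt (mem_univ y) (mem_univ x) (hgrad y)
  have hvi : ⟪y - (1 / L) • F' y - p, x - p⟫ ≤ 0 :=
    hZ.real_inner_sub_le_zero_of_forall_norm_sub_le hp hmin x hx
  have hvi' : ⟪F' y, p - x⟫ ≤ L * ⟪y - p, p - x⟫ := by
    have : ⟪y - (1 / L) • F' y - p, x - p⟫ = (1 / L) * (⟪F' y, p - x⟫ - L * ⟪y - p, p - x⟫) := by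
      rw [sub_right_comm, inner_sub_left, real_inner_smul_left, ← neg_sub p x, inner_neg_right,
        inner_neg_right]
      field_simp
      ring
    rw [this] at hvi
    nlinarith [one_div_pos.mpr hL]
  have hpolar : ‖y - x‖ ^ 2 = ‖y - p‖ ^ 2 + 2 * ⟪y - p, p - x⟫ + ‖p - x‖ ^ 2 := by
    rw [← norm_add_sq_real, sub_add_sub_cancel]
  have hsplit : ⟪F' y, p - y⟫ = ⟪F' y, p - x⟫ + ⟪F' y, x - y⟫ := by
    rw [← inner_add_right, sub_add_sub_cancel]
  nlinarith

end ProjectedGradient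

section Acceleration

variable {E : Type*} [NormedAddCommGroup E] [InnerProductSpace ℝ E]

/-- At `k = 0` the vector in the norm is `z 0 - zstar`, since `0 - 1 = 0` in `ℕ`. -/
noncomputable def nesterovEnergy (F : E → ℝ) (L : ℝ) (z : ℕ → E) (zstar : E) (k : ℕ) : ℝ :=
  ((k : ℝ) + 1) ^ 2 / 4 * (F (z k) - F zstar) +
    L / 2 * ‖((k + 1 : ℝ) / 2) • z k - ((k - 1 : ℝ) / 2) • z (k - 1) - zstar‖ ^ 2

variable {F : E → ℝ} {L : ℝ} {Z : Set E} {z y : ℕ → E} {zstar : E}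

theorem nesterovEnergy_zero : nesterovEnergy F L z zstar 0 =
    (F (z 0) - F zstar) / 4 + L / 2 * ‖z 0 - zstar‖ ^ 2 := by
  have hv : ((0 + 1 : ℝ) / 2) • z 0 - ((0 - 1 : ℝ) / 2) • z 0 - zstar = z 0 - zstar := by module
  simp only [nesterovEnergy, CharP.cast_eq_zero, zero_tsub, hv]
  ring

theorem nesterovEnergy_succ_add_le (hZ : Convex ℝ Z) (hF : ConvexOn ℝ Z F) {k : ℕ}
    (hzk : z k ∈ Z) (hzstar : zstar ∈ Z)
    (hy : y k = z k + (((k : ℝ) - 1) / ((k : ℝ) + 2)) • (z k - z (k - 1)))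
    (hstep : ∀ x ∈ Z, F (z (k + 1)) ≤ F x + L / 2 * (‖y k - x‖ ^ 2 - ‖z (k + 1) - x‖ ^ 2)) :
    nesterovEnergy F L z zstar (k + 1) + (F (z k) - F zstar) / 4 ≤
      nesterovEnergy F L z zstar k := by
  set T : ℝ := ((k : ℝ) + 2) / 2 with hT
  have hT1 : 1 ≤ T := by rw [hT]; linarith [(k.cast_nonneg : (0 : ℝ) ≤ k)]
  have hT0 : 0 < T := by linarith
  set x := (1 - T⁻¹) • z k + T⁻¹ • zstar with hx
  have hθ : 0 ≤ T⁻¹ := inv_nonneg.mpr hT0.le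
  have hθ' : 0 ≤ 1 - T⁻¹ := sub_nonneg.mpr (inv_le_one_of_one_le₀ hT1)
  have hxZ : x ∈ Z := hZ hzk hzstar hθ' hθ (by ring)
  have hFx : F x ≤ (1 - T⁻¹) * F (z k) + T⁻¹ * F zstar := hF.2 hzk hzstar hθ' hθ (by ring)
  have hyx : T • (y k - x) =
      ((k + 1 : ℝ) / 2) • z k - ((k - 1 : ℝ) / 2) • z (k - 1) - zstar := by
    rw [hy, hx, hT]
    match_scalars <;> field_simp
    ring
  have hzx : T • (z (k + 1) - x) =
      ((k + 1 + 1 : ℝ) / 2) • z (k + 1) - ((k + 1 - 1 : ℝ) / 2) • z k - zstar := by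
    rw [hx, hT]
    match_scalars <;> field_simp <;> ring
  have hgap : F (z (k + 1)) - F zstar ≤ (1 - T⁻¹) * (F (z k) - F zstar)
      + L / 2 * (‖y k - x‖ ^ 2 - ‖z (k + 1) - x‖ ^ 2) := by
    linarith [hstep x hxZ]
  have hscaled := mul_le_mul_of_nonneg_left hgap (sq_nonneg T)
  simp only [nesterovEnergy, Nat.add_sub_cancel]
  push_cast
  rw [← hyx, ← hzx, norm_smul, norm_smul, Real.norm_eq_abs, abs_of_pos hT0]
  have hT2 : T ^ 2 * (1 - T⁻¹) = ((k : ℝ) + 1) ^ 2 / 4 - 1 / 4 := by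
    rw [hT]; field_simp; ring
  have hT2' : ((k : ℝ) + 1 + 1) ^ 2 / 4 = T ^ 2 := by rw [hT]; ring
  rw [mul_add, ← mul_assoc, hT2] at hscaled
  rw [hT2', mul_pow, mul_pow]
  linarith

theorem nesterov_rate_of_step_inequality (hZ : Convex ℝ Z) (hF : ConvexOn ℝ Z F) (hL : 0 ≤ L)
    (hz : ∀ k, z k ∈ Z) (hzstar : zstar ∈ Z) (hmin : ∀ w ∈ Z, F zstar ≤ F w)
    (hy : ∀ k : ℕ, y k = z k + (((k : ℝ) - 1) / ((k : ℝ) + 2)) • (z k - z (k - 1)))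
    (hstep : ∀ k, ∀ x ∈ Z,
      F (z (k + 1)) ≤ F x + L / 2 * (‖y k - x‖ ^ 2 - ‖z (k + 1) - x‖ ^ 2))
    {t : ℕ} (ht : 1 ≤ t) :
    F (z t) - F zstar ≤ 2 * L * ‖z 0 - zstar‖ ^ 2 / ((t : ℝ) + 1) ^ 2 := by
  have hgap k : 0 ≤ F (z k) - F zstar := sub_nonneg.mpr (hmin _ (hz k))
  have hsucc k := nesterovEnergy_succ_add_le hZ hF (hz k) hzstar (hy k) (hstep k)
  have hanti : Antitone (nesterovEnergy F L z zstar) :=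
    antitone_nat_of_succ_le fun k => by linarith [hsucc k, hgap k]
  have hone : nesterovEnergy F L z zstar 1 ≤ L / 2 * ‖z 0 - zstar‖ ^ 2 := by
    linarith [hsucc 0, nesterovEnergy_zero (F := F) (L := L) (z := z) (zstar := zstar)]
  have ht_le : ((t : ℝ) + 1) ^ 2 / 4 * (F (z t) - F zstar) ≤ nesterovEnergy F L z zstar t :=
    le_add_of_nonneg_right (by positivity)
  rw [le_div_iff₀ (by positivity)]
  linarith [hanti ht]

end Acceleration

theorem nesterov_accelerated_rate_general (n : ℕ)
    (F : EuclideanSpace ℝ (Fin n) → ℝ) (F' : EuclideanSpace ℝ (Fin n) → EuclideanSpace ℝ (Fin n))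
    (hFconv : ConvexOn ℝ Set.univ F)
    (hgrad : ∀ u, HasGradientAt F (F' u) u)
    (L : ℝ) (hL : 0 < L)
    (hLip : ∀ u v, ‖F' u - F' v‖ ≤ L * ‖u - v‖)
    (Z : Set (EuclideanSpace ℝ (Fin n)))
    (hZconv : Convex ℝ Z)
    (proj : EuclideanSpace ℝ (Fin n) → EuclideanSpace ℝ (Fin n))
    (hproj : ∀ u, proj u ∈ Z ∧ ∀ w ∈ Z, ‖u - proj u‖ ≤ ‖u - w‖)
    (zstar : EuclideanSpace ℝ (Fin n)) (hzstarZ : zstar ∈ Z)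
    (hzstar : ∀ w ∈ Z, F zstar ≤ F w)
    (z y : ℕ → EuclideanSpace ℝ (Fin n)) (hz0 : z 0 ∈ Z)
    (hy : ∀ k : ℕ, y k = z k + (((k : ℝ) - 1) / ((k : ℝ) + 2)) • (z k - z (k - 1)))
    (hupdate : ∀ k : ℕ, z (k + 1) = proj (y k - (1 / L) • F' (y k))) :
    ∀ t : ℕ, 1 ≤ t →
      F (z t) - F zstar ≤ 2 * L * ‖z 0 - zstar‖ ^ 2 / ((t : ℝ) + 1) ^ 2 := by
  intro t ht
  have hz : ∀ k, z k ∈ Z := by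
    rintro (_ | k)
    exacts [hz0, hupdate k ▸ (hproj _).1]
  refine nesterov_rate_of_step_inequality hZconv (hFconv.subset (subset_univ Z) hZconv) hL.le hz
    hzstarZ hzstar hy (fun k x hx => ?_) ht
  rw [hupdate k]
  exact le_add_sq_sub_sq_of_projected_gradient_step hFconv hgrad hL hLip hZconv (hproj _).1
    (hproj _).2 hx

/-- Nesterov/FISTA accelerated projected gradient rate:
`F : ℝⁿ → ℝ` convex with `L`-Lipschitz gradient `F'`, `Z` closed convex, `proj` the metric
projection onto `Z`, iterates `z` with extrapolation points
`y k = z k + ((k-1)/(k+2)) • (z k - z (k-1))` and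
`z (k+1) = proj (y k - (1/L) • F' (y k))`. -/
theorem nesterov_accelerated_rate (n : ℕ)
    (F : EuclideanSpace ℝ (Fin n) → ℝ) (F' : EuclideanSpace ℝ (Fin n) → EuclideanSpace ℝ (Fin n))
    (hFconv : ConvexOn ℝ Set.univ F)
    (hgrad : ∀ u, HasGradientAt F (F' u) u)
    (L : ℝ) (hL : 0 < L)
    (hLip : ∀ u v, ‖F' u - F' v‖ ≤ L * ‖u - v‖)
    (Z : Set (EuclideanSpace ℝ (Fin n))) (hZne : Z.Nonempty) (hZclosed : IsClosed Z)
    (hZconv : Convex ℝ Z)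
    (proj : EuclideanSpace ℝ (Fin n) → EuclideanSpace ℝ (Fin n))
    (hproj : ∀ u, proj u ∈ Z ∧ ∀ w ∈ Z, ‖u - proj u‖ ≤ ‖u - w‖)
    (zstar : EuclideanSpace ℝ (Fin n)) (hzstarZ : zstar ∈ Z)
    (hzstar : ∀ w ∈ Z, F zstar ≤ F w)
    (z y : ℕ → EuclideanSpace ℝ (Fin n)) (hz0 : z 0 ∈ Z)
    (hy : ∀ k : ℕ, y k = z k + (((k : ℝ) - 1) / ((k : ℝ) + 2)) • (z k - z (k - 1)))
    (hupdate : ∀ k : ℕ, z (k + 1) = proj (y k - (1 / L) • F' (y k))) :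
    ∀ t : ℕ, 1 ≤ t →
      F (z t) - F zstar ≤ 2 * L * ‖z 0 - zstar‖ ^ 2 / ((t : ℝ) + 1) ^ 2 :=
  nesterov_accelerated_rate_general n F F' hFconv hgrad L hL hLip Z hZconv proj hproj zstar hzstarZ
    hzstar z y hz0 hy hupdate
end
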